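/- Let G be a finitely generated abelian group with finite symmetric generating set S = S⁻¹ (1 ∉ S) and word metric d. Then every weakly-geodesic ray γ : T → G admits a geodesic ray γ' : T' → G with lim_{t→∞, t∈T} (d(γ(t),y) − d(γ(t),z)) = lim_{t→∞, t∈T'} (d(γ'(t),y) − d(γ'(t),z)) for all y, z ∈ G; that is, every point of the metric boundary of the Cayley graph of (G,S) is a Busemann point. -/

import Mathlib

open Filter Topology

/-- `T` is a valid domain for a ray: an unbounded subset of `[0,∞)` containing `0`. -/
def IsRayDomain (T : Set ℝ) : Prop :=
  T ⊆ Set.Ici (0 : ℝ) ∧ 0 ∈ T ∧ ∀ M : ℝ, ∃ t ∈ T, M < t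

/-- A weakly-geodesic ray for the distance function `d`. -/
def WeaklyGeodesicRay {X : Type*} (d : X → X → ℝ) (T : Set ℝ) (γ : ℝ → X) : Prop :=
  ∀ y : X, ∀ ε : ℝ, 0 < ε → ∃ N : ℝ, ∀ s ∈ T, ∀ t ∈ T, N ≤ s → N ≤ t →
    |d (γ t) (γ 0) - t| < ε ∧ |d (γ t) y - d (γ s) y - (t - s)| < ε

/-- An almost-geodesic ray for the distance function `d`. -/
def AlmostGeodesicRay {X : Type*} (d : X → X → ℝ) (T : Set ℝ) (γ : ℝ → X) : Prop :=
  ∀ ε : ℝ, 0 < ε → ∃ N : ℝ, ∀ s ∈ T, ∀ t ∈ T, N ≤ s → s ≤ t →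
    |d (γ t) (γ s) + d (γ s) (γ 0) - t| < ε

/-- A geodesic ray for the distance function `d`. -/
def GeodesicRay {X : Type*} (d : X → X → ℝ) (T : Set ℝ) (γ : ℝ → X) : Prop :=
  ∀ s ∈ T, ∀ t ∈ T, d (γ s) (γ t) = |s - t|

/-- `L` is the limit of `d(γ(t),y) - d(γ(t),z)` as `t → ∞` along `T`. -/
def RayLimit {X : Type*} (d : X → X → ℝ) (T : Set ℝ) (γ : ℝ → X) (y z : X) (L : ℝ) : Prop :=
  Tendsto (fun t => d (γ t) y - d (γ t) z) (atTop ⊓ 𝓟 T) (𝓝 L)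

/-- The word metric on a group `G` with respect to a generating set `S`:
`wordDist S g h` is the least `n` such that `g⁻¹ * h` is a product of `n` elements of `S`. -/
noncomputable def wordDist {G : Type*} [Group G] (S : Set G) (g h : G) : ℕ :=
  sInf {n | ∃ l : List G, l.length = n ∧ (∀ x ∈ l, x ∈ S) ∧ l.prod = g⁻¹ * h}

/-!
Choose geodesic words from `γ 0` to `γ t`; as `G` is abelian they are multisets of generators.
Along an ultrafilter refining `t → ∞` in `T`, each generator occurs either a fixed number of times
or unboundedly often. Keeping the fixed multiplicities and taking `k` copies of each unbounded
generator gives geodesic words `C k` that are eventually contained in, and eventually contain,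
the words to `γ t`. Since `q ↦ d(q, y) - d(q, γ 0)` decreases along geodesics issuing from
`γ 0`, and is eventually constant along `γ` because distances are integers, it has the same
eventual value along `k ↦ γ 0 * (C k).prod`, which is a geodesic ray after rescaling time by the
number of unbounded generators.
-/

section WordMetric

variable {G : Type*} [Group G] {S : Set G}

theorem exists_list_prod_eq (hSsym : ∀ s ∈ S, s⁻¹ ∈ S) (hgen : Subgroup.closure S = ⊤)
    (g : G) : ∃ l : List G, (∀ x ∈ l, x ∈ S) ∧ l.prod = g := by
  have hS : S ∪ S⁻¹ = S := Set.union_eq_left.2 fun x hx => by simpa using hSsym _ hx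
  have hg : g ∈ (Subgroup.closure S).toSubmonoid := by rw [hgen]; trivial
  rw [Subgroup.closure_toSubmonoid, hS] at hg
  exact Submonoid.exists_list_of_mem_closure hg

theorem wordDist_le_length {g h : G} {l : List G} (hl : ∀ x ∈ l, x ∈ S)
    (hprod : l.prod = g⁻¹ * h) : wordDist S g h ≤ l.length :=
  Nat.sInf_le ⟨l, rfl, hl, hprod⟩

theorem exists_list_length_eq_wordDist (hSsym : ∀ s ∈ S, s⁻¹ ∈ S)
    (hgen : Subgroup.closure S = ⊤) (g h : G) :
    ∃ l : List G, l.length = wordDist S g h ∧ (∀ x ∈ l, x ∈ S) ∧ l.prod = g⁻¹ * h := by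
  obtain ⟨l, hl, hprod⟩ := exists_list_prod_eq hSsym hgen (g⁻¹ * h)
  exact Nat.sInf_mem (s := {n | ∃ l : List G, l.length = n ∧ (∀ x ∈ l, x ∈ S) ∧
    l.prod = g⁻¹ * h}) ⟨l.length, l, rfl, hl, hprod⟩

theorem wordDist_triangle (hSsym : ∀ s ∈ S, s⁻¹ ∈ S) (hgen : Subgroup.closure S = ⊤)
    (g k h : G) : wordDist S g h ≤ wordDist S g k + wordDist S k h := by
  obtain ⟨l₁, hlen₁, hl₁, hprod₁⟩ := exists_list_length_eq_wordDist hSsym hgen g k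
  obtain ⟨l₂, hlen₂, hl₂, hprod₂⟩ := exists_list_length_eq_wordDist hSsym hgen k h
  calc wordDist S g h ≤ (l₁ ++ l₂).length :=
        wordDist_le_length (by simpa [or_imp, forall_and] using And.intro hl₁ hl₂)
          (by rw [List.prod_append, hprod₁, hprod₂]; group)
    _ = wordDist S g k + wordDist S k h := by rw [List.length_append, hlen₁, hlen₂]

theorem wordDist_comm (hSsym : ∀ s ∈ S, s⁻¹ ∈ S) (hgen : Subgroup.closure S = ⊤)
    (g h : G) : wordDist S g h = wordDist S h g := by
  suffices key : ∀ a b : G, wordDist S a b ≤ wordDist S b a from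
    le_antisymm (key g h) (key h g)
  intro a b
  obtain ⟨l, hlen, hl, hprod⟩ := exists_list_length_eq_wordDist hSsym hgen b a
  calc wordDist S a b ≤ (l.map (·⁻¹)).reverse.length :=
        wordDist_le_length (by simpa using fun x hx => by simpa using hSsym _ (hl _ hx))
          (by rw [← List.prod_inv_reverse, hprod]; group)
    _ = wordDist S b a := by simp [hlen]

theorem wordDist_mul_right (g x : G) : wordDist S g (g * x) = wordDist S 1 x := by
  simp [wordDist]

end WordMetric

section GeodesicWord

variable {G : Type*} [CommGroup G] {S : Set G}

/-- Words are recorded as multisets of letters, which loses nothing since `G` is abelian. -/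
def IsGeodesicWord (S : Set G) (B : Multiset G) : Prop :=
  (∀ x ∈ B, x ∈ S) ∧ wordDist S 1 B.prod = Multiset.card B

theorem wordDist_mul_prod_le {A : Multiset G} (hA : ∀ x ∈ A, x ∈ S) (g : G) :
    wordDist S g (g * A.prod) ≤ Multiset.card A := by
  calc wordDist S g (g * A.prod) ≤ A.toList.length :=
        wordDist_le_length (by simpa using hA) (by simp)
    _ = Multiset.card A := Multiset.length_toList A

theorem IsGeodesicWord.wordDist_mul_prod {B : Multiset G} (hB : IsGeodesicWord S B) (g : G) :
    wordDist S g (g * B.prod) = Multiset.card B := by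
  rw [wordDist_mul_right, hB.2]

theorem exists_isGeodesicWord (hSsym : ∀ s ∈ S, s⁻¹ ∈ S) (hgen : Subgroup.closure S = ⊤)
    (g h : G) : ∃ B : Multiset G, IsGeodesicWord S B ∧ g * B.prod = h := by
  obtain ⟨l, hlen, hl, hprod⟩ := exists_list_length_eq_wordDist hSsym hgen g h
  refine ⟨l, ⟨hl, ?_⟩, by simp [hprod]⟩
  rw [Multiset.prod_coe, Multiset.coe_card, hlen, hprod, ← wordDist_mul_right g,
    mul_inv_cancel_left]

theorem IsGeodesicWord.wordDist_add_card_of_le (hSsym : ∀ s ∈ S, s⁻¹ ∈ S)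
    (hgen : Subgroup.closure S = ⊤) {A B : Multiset G} (hB : IsGeodesicWord S B) (hAB : A ≤ B)
    (o : G) :
    wordDist S o (o * A.prod) = Multiset.card A ∧
      wordDist S (o * A.prod) (o * B.prod) + Multiset.card A = Multiset.card B := by
  classical
  have hsplit : A + (B - A) = B := add_tsub_cancel_of_le hAB
  have hA := wordDist_mul_prod_le (fun x hx => hB.1 x (Multiset.mem_of_le hAB hx)) o
  have hBA := wordDist_mul_prod_le (fun x hx => hB.1 x (Multiset.mem_of_le
    (Multiset.sub_le_self B A) hx)) (o * A.prod)
  rw [mul_assoc, ← Multiset.prod_add, hsplit] at hBA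
  have hcard : Multiset.card A + Multiset.card (B - A) = Multiset.card B := by
    rw [← Multiset.card_add, hsplit]
  have htri := wordDist_triangle hSsym hgen o (o * A.prod) (o * B.prod)
  rw [hB.wordDist_mul_prod] at htri
  omega

theorem IsGeodesicWord.of_le (hSsym : ∀ s ∈ S, s⁻¹ ∈ S) (hgen : Subgroup.closure S = ⊤)
    {A B : Multiset G} (hB : IsGeodesicWord S B) (hAB : A ≤ B) : IsGeodesicWord S A :=
  ⟨fun x hx => hB.1 x (Multiset.mem_of_le hAB hx), by
    simpa using (hB.wordDist_add_card_of_le hSsym hgen hAB 1).1⟩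

theorem IsGeodesicWord.wordDist_sub_wordDist_le (hSsym : ∀ s ∈ S, s⁻¹ ∈ S)
    (hgen : Subgroup.closure S = ⊤) {A B : Multiset G} (hB : IsGeodesicWord S B) (hAB : A ≤ B)
    (o y : G) :
    (wordDist S (o * B.prod) y : ℤ) - wordDist S (o * B.prod) o ≤
      (wordDist S (o * A.prod) y : ℤ) - wordDist S (o * A.prod) o := by
  obtain ⟨hoA, hAB'⟩ := hB.wordDist_add_card_of_le hSsym hgen hAB o
  have hBo : wordDist S (o * B.prod) o = Multiset.card B := by
    rw [wordDist_comm hSsym hgen, hB.wordDist_mul_prod]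
  have hAo : wordDist S (o * A.prod) o = Multiset.card A := by
    rw [wordDist_comm hSsym hgen, hoA]
  have htri := wordDist_triangle hSsym hgen (o * B.prod) (o * A.prod) y
  rw [wordDist_comm hSsym hgen (o * B.prod) (o * A.prod)] at htri
  rw [hBo, hAo]
  omega

end GeodesicWord

theorem Ultrafilter.tendsto_atTop_or_eventually_eq {α : Type*} (U : Ultrafilter α)
    (f : α → ℕ) : Tendsto f U atTop ∨ ∃ v, ∀ᶠ a in U, f a = v := by
  rcases (U.map f).le_cofinite_or_eq_pure with h | ⟨v, hv⟩
  · rw [Ultrafilter.coe_map, Nat.cofinite_eq_atTop] at h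
    exact Or.inl h
  · have : {v} ∈ U.map f := by rw [hv]; exact Ultrafilter.mem_pure.2 rfl
    exact Or.inr ⟨v, this⟩

namespace Multiset

variable {β : Type*} [DecidableEq β]

theorem count_finset_sum_replicate (s : Finset β) (c : β → ℕ) (x : β) :
    (∑ y ∈ s, replicate (c y) y).count x = if x ∈ s then c x else 0 := by
  simp [count_sum', count_replicate]

theorem finset_sum_replicate_le_iff {s : Finset β} {c : β → ℕ} {M : Multiset β} :
    ∑ y ∈ s, replicate (c y) y ≤ M ↔ ∀ x ∈ s, c x ≤ M.count x := by
  refine le_iff_count.trans ⟨fun h x hx => ?_, fun h x => ?_⟩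
  · simpa [count_finset_sum_replicate, hx] using h x
  · rw [count_finset_sum_replicate]
    split_ifs with hx
    exacts [h x hx, Nat.zero_le _]

theorem le_finset_sum_replicate_iff {s : Finset β} {c : β → ℕ} {M : Multiset β}
    (hM : ∀ x ∈ M, x ∈ s) : M ≤ ∑ y ∈ s, replicate (c y) y ↔ ∀ x ∈ s, M.count x ≤ c x := by
  refine le_iff_count.trans ⟨fun h x hx => ?_, fun h x => ?_⟩
  · simpa [count_finset_sum_replicate, hx] using h x
  · rw [count_finset_sum_replicate]
    split_ifs with hx
    · exact h x hx
    · exact (count_eq_zero.2 fun hxM => hx (hM x hxM)).le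

end Multiset

/-- Each letter occurs in `m a` either a `U`-eventually constant number `v x` of times or
`U`-unboundedly often; `C k` takes `v x` copies of each letter of the first kind and `k` copies
of each letter of the second kind, of which there are `r`. -/
theorem Ultrafilter.exists_multiset_chain {α β : Type*} [DecidableEq β] (U : Ultrafilter α)
    (m : α → Multiset β) (s : Finset β) (hm : ∀ a, ∀ x ∈ m a, x ∈ s)
    (hcard : Tendsto (fun a => Multiset.card (m a)) U atTop) :
    ∃ (C : ℕ → Multiset β) (r : ℕ), 0 < r ∧ Monotone C ∧
      (∀ k, Multiset.card (C k) = Multiset.card (C 0) + k * r) ∧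
      (∀ k, ∀ᶠ a in U, C k ≤ m a) ∧ ∀ᶠ a in U, ∀ᶠ k in atTop, m a ≤ C k := by
  classical
  set K : β → Prop := fun x => Tendsto (fun a => (m a).count x) U atTop
  have hv (x : β) : ∃ v, ¬K x → ∀ᶠ a in U, (m a).count x = v :=
    (U.tendsto_atTop_or_eventually_eq fun a => (m a).count x).elim
      (fun h => ⟨0, fun h' => absurd h h'⟩) fun ⟨v, h⟩ => ⟨v, fun _ => h⟩
  choose v hv using hv
  set C : ℕ → Multiset β := fun k => ∑ x ∈ s, Multiset.replicate (if K x then k else v x) x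
  set r := (s.filter K).card
  have hmono : Monotone C := fun j k hjk => Multiset.finset_sum_replicate_le_iff.2 fun x hx => by
    rw [Multiset.count_finset_sum_replicate, if_pos hx]
    split_ifs <;> omega
  have hCcard (k : ℕ) : Multiset.card (C k) = Multiset.card (C 0) + k * r := by
    simp only [C, Multiset.card_sum, Multiset.card_replicate, Finset.sum_ite,
      Finset.sum_const, smul_eq_mul, r]
    ring
  have hCm (k : ℕ) : ∀ᶠ a in U, C k ≤ m a := by
    refine ((Filter.eventually_all_finset s).2 fun x _ => ?_).mono fun a ha =>
      Multiset.finset_sum_replicate_le_iff.2 ha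
    by_cases hK : K x
    · have hK' : Tendsto (fun a => (m a).count x) U atTop := hK
      simpa only [hK, if_true] using hK'.eventually_ge_atTop k
    · filter_upwards [hv x hK] with a ha
      simp [hK, ha]
  have hmC : ∀ᶠ a in U, ∀ᶠ k in atTop, m a ≤ C k := by
    filter_upwards [(Filter.eventually_all_finset s).2 fun x _ =>
      Filter.eventually_imp_distrib_left.2 (hv x)] with a ha
    filter_upwards [eventually_ge_atTop (Multiset.card (m a))] with k hk
    refine (Multiset.le_finset_sum_replicate_iff (hm a)).2 fun x hx => ?_
    split_ifs with hK
    · exact (Multiset.count_le_card x (m a)).trans hk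
    · exact (ha x hx hK).le
  refine ⟨C, r, Nat.pos_of_ne_zero fun hr => ?_, hmono, hCcard, hCm, hmC⟩
  -- with `r = 0` the chain is constant, yet it eventually contains the unbounded `m a`
  obtain ⟨a, ha, hk⟩ := ((hcard.eventually_gt_atTop (Multiset.card (C 0))).and hmC).exists
  obtain ⟨k, hk⟩ := hk.exists
  have := Multiset.card_le_card hk
  rw [hCcard, hr] at this
  omega

section Rays

variable {X : Type*}

theorem IsRayDomain.neBot {T : Set ℝ} (hT : IsRayDomain T) : (atTop ⊓ 𝓟 T).NeBot :=
  frequently_mem_iff_neBot.1 <| frequently_atTop'.2 fun M =>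
    let ⟨t, htT, hMt⟩ := hT.2.2 M
    ⟨t, hMt, htT⟩

theorem WeaklyGeodesicRay.tendsto_atTop {d : X → X → ℝ} {T : Set ℝ} {γ : ℝ → X}
    (hγ : WeaklyGeodesicRay d T γ) : Tendsto (fun t => d (γ t) (γ 0)) (atTop ⊓ 𝓟 T) atTop := by
  obtain ⟨N, hN⟩ := hγ (γ 0) 1 one_pos
  refine tendsto_atTop_mono' _ ?_
    (tendsto_atTop_add_const_right _ (-1) (tendsto_id.mono_left inf_le_left))
  filter_upwards [inter_mem_inf (Ici_mem_atTop N) (mem_principal_self T)] with t ⟨htN, htT⟩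
  have := abs_lt.1 (hN t htT t htT htN htN).1
  simp only [id]
  linarith

theorem WeaklyGeodesicRay.exists_eventually_sub_eq {d : X → X → ℕ} {T : Set ℝ} {γ : ℝ → X}
    [(atTop ⊓ 𝓟 T).NeBot] (hγ : WeaklyGeodesicRay (fun a b => (d a b : ℝ)) T γ) (y : X) :
    ∃ β : ℤ, ∀ᶠ t in atTop ⊓ 𝓟 T, (d (γ t) y : ℤ) - d (γ t) (γ 0) = β := by
  obtain ⟨N, hN⟩ := hγ y (1 / 4) (by norm_num)
  have hmem : Set.Ici N ∩ T ∈ atTop ⊓ 𝓟 T := inter_mem_inf (Ici_mem_atTop N) (mem_principal_self T)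
  obtain ⟨s, hsN, hsT⟩ := Filter.nonempty_of_mem hmem
  refine ⟨(d (γ s) y : ℤ) - d (γ s) (γ 0), mem_of_superset hmem fun t ⟨htN, htT⟩ => ?_⟩
  obtain ⟨ht, hts⟩ := hN s hsT t htT hsN htN
  have hs := (hN s hsT s hsT hsN hsN).1
  -- two integers within `3/4` of each other
  have : |(((d (γ t) y : ℤ) - d (γ t) (γ 0) - ((d (γ s) y : ℤ) - d (γ s) (γ 0)) : ℤ) : ℝ)| < 1 := by
    push_cast
    rw [abs_lt] at *
    constructor <;> linarith
  exact sub_eq_zero.1 (Int.abs_lt_one_iff.1 (by exact_mod_cast this))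

theorem rayLimit_of_eventually {d : X → X → ℕ} {T : Set ℝ} {γ : ℝ → X} {o y z : X} {βy βz : ℤ}
    (hy : ∀ᶠ t in atTop ⊓ 𝓟 T, (d (γ t) y : ℤ) - d (γ t) o = βy)
    (hz : ∀ᶠ t in atTop ⊓ 𝓟 T, (d (γ t) z : ℤ) - d (γ t) o = βz) :
    RayLimit (fun a b => (d a b : ℝ)) T γ y z (βy - βz) := by
  refine tendsto_const_nhds.congr' ?_
  filter_upwards [hy, hz] with t hty htz
  have : ((d (γ t) y : ℤ) - d (γ t) z : ℤ) = βy - βz := by omega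
  exact_mod_cast this.symm

theorem isRayDomain_range_mul {r : ℕ} (hr : 0 < r) :
    IsRayDomain (Set.range fun k : ℕ => ((k * r : ℕ) : ℝ)) := by
  refine ⟨Set.range_subset_iff.2 fun k => Set.mem_Ici.2 (Nat.cast_nonneg _), ⟨0, by simp⟩,
    fun M => ?_⟩
  obtain ⟨k, hk⟩ := exists_nat_gt M
  exact ⟨_, ⟨k, rfl⟩, hk.trans_le (Nat.cast_le.2 (Nat.le_mul_of_pos_right k hr))⟩

theorem geodesicRay_range_mul {d : X → X → ℝ} {Γ : ℕ → X} {r : ℕ} (hr : 0 < r)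
    (hΓ : ∀ j k, d (Γ j) (Γ k) = |(j : ℝ) - k| * r) :
    GeodesicRay d (Set.range fun k : ℕ => ((k * r : ℕ) : ℝ)) (fun x => Γ (⌊x⌋₊ / r)) := by
  rintro _ ⟨j, rfl⟩ _ ⟨k, rfl⟩
  simp only [Nat.floor_natCast, Nat.mul_div_cancel _ hr, hΓ]
  push_cast
  rw [← sub_mul, abs_mul, Nat.abs_cast]

theorem eventually_range_mul {P : ℕ → Prop} {r : ℕ} (hr : 0 < r) (h : ∀ᶠ k in atTop, P k) :
    ∀ᶠ x in atTop ⊓ 𝓟 (Set.range fun k : ℕ => ((k * r : ℕ) : ℝ)), P (⌊x⌋₊ / r) := by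
  obtain ⟨k₀, hk₀⟩ := eventually_atTop.1 h
  filter_upwards [inter_mem_inf (Ici_mem_atTop ((k₀ * r : ℕ) : ℝ)) (mem_principal_self _)]
    with x ⟨hk, hx⟩
  obtain ⟨k, rfl⟩ := hx
  rw [Set.mem_Ici] at hk
  simp only [Nat.floor_natCast, Nat.mul_div_cancel _ hr]
  exact hk₀ k (Nat.le_of_mul_le_mul_right (Nat.cast_le.1 hk) hr)

end Rays

section GeodesicChain

variable {G : Type*} [CommGroup G] {S : Set G}

theorem wordDist_chain_eq_abs_mul (hSsym : ∀ s ∈ S, s⁻¹ ∈ S) (hgen : Subgroup.closure S = ⊤)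
    {C : ℕ → Multiset G} (hmono : Monotone C) (hgeo : ∀ k, IsGeodesicWord S (C k)) {r : ℕ}
    (hcard : ∀ k, Multiset.card (C k) = Multiset.card (C 0) + k * r) (o : G) (j k : ℕ) :
    (wordDist S (o * (C j).prod) (o * (C k).prod) : ℝ) = |(j : ℝ) - k| * r := by
  wlog hjk : j ≤ k generalizing j k
  · rw [wordDist_comm hSsym hgen, abs_sub_comm]
    exact this k j (le_of_not_ge hjk)
  have h := ((hgeo k).wordDist_add_card_of_le hSsym hgen (hmono hjk) o).2
  rw [hcard j, hcard k] at h
  rw [abs_of_nonpos (sub_nonpos.2 (Nat.cast_le.2 hjk))]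
  have h' : (wordDist S (o * (C j).prod) (o * (C k).prod) : ℝ) + j * r = k * r := by
    exact_mod_cast (by omega : wordDist S (o * (C j).prod) (o * (C k).prod) + j * r = k * r)
  linarith

/-- `q ↦ d(q, y) - d(q, o)` decreases along geodesic words from `o`, and `C k` lies inside
some `m a` and, for large `k`, around some other. -/
theorem eventually_wordDist_sub_chain_eq (hSsym : ∀ s ∈ S, s⁻¹ ∈ S)
    (hgen : Subgroup.closure S = ⊤) {α : Type*} {U : Ultrafilter α} {m : α → Multiset G}
    (hm : ∀ a, IsGeodesicWord S (m a)) {C : ℕ → Multiset G} (hCm : ∀ k, ∀ᶠ a in U, C k ≤ m a)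
    (hmC : ∀ᶠ a in U, ∀ᶠ k in atTop, m a ≤ C k) (o y : G) {β : ℤ}
    (hβ : ∀ᶠ a in U, (wordDist S (o * (m a).prod) y : ℤ) - wordDist S (o * (m a).prod) o = β) :
    ∀ᶠ k in atTop, (wordDist S (o * (C k).prod) y : ℤ) - wordDist S (o * (C k).prod) o = β := by
  obtain ⟨a, hak, hβa⟩ := (hmC.and hβ).exists
  filter_upwards [hak] with k hk
  obtain ⟨b, hkb, hβb⟩ := ((hCm k).and hβ).exists
  have hCk : IsGeodesicWord S (C k) := (hm b).of_le hSsym hgen hkb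
  have hle := hCk.wordDist_sub_wordDist_le hSsym hgen hk o y
  have hge := (hm b).wordDist_sub_wordDist_le hSsym hgen hkb o y
  omega

end GeodesicChain

theorem stmt10_general {G : Type*} [CommGroup G] (S : Set G) (hSfin : S.Finite)
    (hSsym : ∀ s ∈ S, s⁻¹ ∈ S)
    (hgen : Subgroup.closure S = ⊤) :
    ∀ (T : Set ℝ) (γ : ℝ → G), IsRayDomain T →
      WeaklyGeodesicRay (fun g h => (wordDist S g h : ℝ)) T γ →
      ∃ (T' : Set ℝ) (γ' : ℝ → G), IsRayDomain T' ∧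
        GeodesicRay (fun g h => (wordDist S g h : ℝ)) T' γ' ∧
        ∀ y z : G, ∃ L : ℝ,
          RayLimit (fun g h => (wordDist S g h : ℝ)) T γ y z L ∧
          RayLimit (fun g h => (wordDist S g h : ℝ)) T' γ' y z L := by
  classical
  intro T γ hT hγ
  have := hT.neBot
  choose m hm hmγ using fun t => exists_isGeodesicWord hSsym hgen (γ 0) (γ t)
  set U := Ultrafilter.of (atTop ⊓ 𝓟 T)
  have hU : (U : Filter ℝ) ≤ atTop ⊓ 𝓟 T := Ultrafilter.of_le _
  have hcard : Tendsto (fun t => Multiset.card (m t)) U atTop := by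
    refine (tendsto_natCast_atTop_iff.1 (hγ.tendsto_atTop.mono_left hU)).congr fun t => ?_
    rw [wordDist_comm hSsym hgen, ← hmγ t, (hm t).wordDist_mul_prod]
  obtain ⟨C, r, hr, hmono, hCcard, hCm, hmC⟩ := U.exists_multiset_chain m hSfin.toFinset
    (fun t x hx => hSfin.mem_toFinset.2 ((hm t).1 x hx)) hcard
  have hCgeo (k : ℕ) : IsGeodesicWord S (C k) :=
    (hCm k).exists.elim fun t ht => (hm t).of_le hSsym hgen ht
  have hβ (y : G) : ∃ β : ℤ,
      (∀ᶠ t in atTop ⊓ 𝓟 T, (wordDist S (γ t) y : ℤ) - wordDist S (γ t) (γ 0) = β) ∧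
      ∀ᶠ k in atTop,
        (wordDist S (γ 0 * (C k).prod) y : ℤ) - wordDist S (γ 0 * (C k).prod) (γ 0) = β := by
    obtain ⟨β, hβ⟩ := hγ.exists_eventually_sub_eq y
    refine ⟨β, hβ, eventually_wordDist_sub_chain_eq hSsym hgen hm hCm hmC (γ 0) y ?_⟩
    filter_upwards [hU hβ] with t ht
    rwa [hmγ]
  have hΓ := wordDist_chain_eq_abs_mul hSsym hgen hmono hCgeo hCcard (γ 0)
  refine ⟨_, fun x => γ 0 * (C (⌊x⌋₊ / r)).prod, isRayDomain_range_mul hr,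
    geodesicRay_range_mul (Γ := fun k => γ 0 * (C k).prod) hr hΓ, fun y z => ?_⟩
  obtain ⟨βy, hyT, hyC⟩ := hβ y
  obtain ⟨βz, hzT, hzC⟩ := hβ z
  exact ⟨βy - βz, rayLimit_of_eventually hyT hzT,
    rayLimit_of_eventually (eventually_range_mul hr hyC) (eventually_range_mul hr hzC)⟩

/-- Let `G` be a finitely generated abelian group with finite symmetric
generating set `S` (with `1 ∉ S`) and word metric `d`. Then every point of the metric
boundary of the Cayley graph is a Busemann point: every weakly-geodesic ray has the same
boundary limits as some geodesic ray. -/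
theorem stmt10 {G : Type*} [CommGroup G] (S : Set G) (hSfin : S.Finite)
    (hSsym : ∀ s ∈ S, s⁻¹ ∈ S) (hone : (1 : G) ∉ S)
    (hgen : Subgroup.closure S = ⊤) :
    ∀ (T : Set ℝ) (γ : ℝ → G), IsRayDomain T →
      WeaklyGeodesicRay (fun g h => (wordDist S g h : ℝ)) T γ →
      ∃ (T' : Set ℝ) (γ' : ℝ → G), IsRayDomain T' ∧
        GeodesicRay (fun g h => (wordDist S g h : ℝ)) T' γ' ∧
        ∀ y z : G, ∃ L : ℝ,
          RayLimit (fun g h => (wordDist S g h : ℝ)) T γ y z L ∧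
          RayLimit (fun g h => (wordDist S g h : ℝ)) T' γ' y z L :=
  stmt10_general S hSfin hSsym hgen
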